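/- arXiv:1711.06923 — 6 statements merged into one kernel-verified Lean document; each statement's English description precedes it below -/
import Mathlib

section
/- For the linearized connection D of an Ehresmann connection on a vector bundle E → M, and any vector field X along π (i.e. X ∈ Γ(π*TM)), one has D_{X^H} 𝕀 = −κ(𝓛_Δ X^H), where Δ is the Liouville vector field. Consequently, D_{X^H} 𝕀 = 0 for all X if and only if the horizontal distribution is invariant under the dilations a ↦ e^s a, i.e. the connection is homogeneous. -/
noncomputable section

/-- Total space of the (locally trivialized) vector bundle `π : E = ℝⁿ × ℝᵐ → M = ℝⁿ`. -/
abbrev EE (n m : ℕ) := (Fin n → ℝ) × (Fin m → ℝ)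

/-- The linearized covariant derivative `D_U s` on the pullback bundle `π*E → E` of the
nonlinear connection with coefficients `Γ` (so `H_i = ∂/∂xⁱ - Γᴬᵢ ∂/∂uᴬ`); for a vector field
`U` on `E` and a section `s` of `π*E`, `D_U s = fderiv s (U) + Σᵢ Uⁱ (∂Γᵢ/∂u) (s)`. -/
def Dlin {n m : ℕ} (Γ : Fin n → EE n m → (Fin m → ℝ))
    (U : EE n m → EE n m) (s : EE n m → (Fin m → ℝ)) (p : EE n m) : Fin m → ℝ :=
  fderiv ℝ s p (U p) + ∑ i, (U p).1 i • fderiv ℝ (fun u => Γ i (p.1, u)) p.2 (s p)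

/-- Vertical lift of a section `η` of `π*E`. -/
def vl {n m : ℕ} (η : EE n m → (Fin m → ℝ)) (p : EE n m) : EE n m := (0, η p)

/-- Horizontal lift of a vector field `X` along `π` with respect to the nonlinear
connection `Γ`. -/
def hl {n m : ℕ} (Γ : Fin n → EE n m → (Fin m → ℝ)) (X : EE n m → (Fin n → ℝ))
    (p : EE n m) : EE n m := (X p, -(∑ i, X p i • Γ i p))

/-- Lie bracket of vector fields on `E`. -/
def lieBr {n m : ℕ} (U W : EE n m → EE n m) (p : EE n m) : EE n m :=
  fderiv ℝ W p (U p) - fderiv ℝ U p (W p)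

/-- Curvature tensor of the linearized connection `D`. -/
def Curv {n m : ℕ} (Γ : Fin n → EE n m → (Fin m → ℝ)) (U W : EE n m → EE n m)
    (s : EE n m → (Fin m → ℝ)) (p : EE n m) : Fin m → ℝ :=
  Dlin Γ U (Dlin Γ W s) p - Dlin Γ W (Dlin Γ U s) p - Dlin Γ (lieBr U W) s p

/-- Connector (vertical projection) of the nonlinear connection. -/
def kc {n m : ℕ} (Γ : Fin n → EE n m → (Fin m → ℝ)) (W : EE n m → EE n m)
    (p : EE n m) : Fin m → ℝ :=
  (W p).2 + ∑ i, (W p).1 i • Γ i p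

/-! In a local trivialization both `D_{X^H} 𝕀` and `-κ([Δ, X^H])` equal
`∑ᵢ Xⁱ (∂ᵤΓᵢ · u - Γᵢ)`: in the connector the terms carrying derivatives of `X` cancel.
Testing against the coordinate fields, `D_{X^H} 𝕀` vanishes for all `X` iff every fibre map
`Γᵢ(x, ·)` satisfies Euler's identity `∂ᵤΓᵢ(x, u) · u = Γᵢ(x, u)`, which is equivalent to positive
homogeneity of degree one because `t ↦ t⁻¹ Γᵢ(x, t u)` then has zero derivative on `(0, ∞)`. -/

open Set ContinuousLinearMap

section Homogeneous

variable {E F G : Type*} [NormedAddCommGroup E] [NormedSpace ℝ E]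
  [NormedAddCommGroup F] [NormedSpace ℝ F] [NormedAddCommGroup G] [NormedSpace ℝ G]

theorem fderiv_comp_prodMk_right_apply {f : E × F → G} {x : E} {y : F}
    (hf : DifferentiableAt ℝ f (x, y)) (v : F) :
    fderiv ℝ (fun w => f (x, w)) y v = fderiv ℝ f (x, y) (0, v) := by
  have h : HasFDerivAt (fun w => f (x, w)) ((fderiv ℝ f (x, y)).comp (inr ℝ E F)) y :=
    hf.hasFDerivAt.comp y (hasFDerivAt_prodMk_right x y)
  rw [h.fderiv]
  rfl

theorem hasDerivAt_comp_smul_const {f : E → F} {u : E} {t : ℝ}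
    (hf : DifferentiableAt ℝ f (t • u)) :
    HasDerivAt (fun s : ℝ => f (s • u)) (fderiv ℝ f (t • u) u) t := by
  simpa [Function.comp_def] using
    hf.hasFDerivAt.comp_hasDerivAt t ((hasDerivAt_id t).smul_const u)

theorem fderiv_apply_self_of_smul_eq {f : E → F} {u : E} (hf : DifferentiableAt ℝ f u)
    (hom : ∀ t : ℝ, 0 < t → f (t • u) = t • f u) : fderiv ℝ f u u = f u := by
  have hlhs : HasDerivAt (fun s : ℝ => f (s • u)) (fderiv ℝ f u u) 1 := by
    simpa using hasDerivAt_comp_smul_const (t := 1) (by simpa using hf)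
  have hrhs : HasDerivAt (fun s : ℝ => f (s • u)) (f u) 1 := by
    refine (by simpa using (hasDerivAt_id (1 : ℝ)).smul_const (f u) :
      HasDerivAt (fun s : ℝ => s • f u) (f u) 1).congr_of_eventuallyEq ?_
    filter_upwards [Ioi_mem_nhds one_pos] with s hs using hom s hs
  exact hlhs.unique hrhs

theorem smul_eq_of_fderiv_apply_self {f : E → F} (hf : Differentiable ℝ f)
    (euler : ∀ v, fderiv ℝ f v v = f v) {t : ℝ} (ht : 0 < t) (u : E) :
    f (t • u) = t • f u := by
  -- `s ↦ s⁻¹ • f (s • u)` has derivative `-s⁻² f(s u) + s⁻¹ f'(s u) u = 0` on `(0, ∞)`.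
  have hderiv : ∀ s ∈ Ioi (0 : ℝ), HasDerivAt (fun s : ℝ => s⁻¹ • f (s • u)) 0 s := by
    intro s hs
    have hs0 : s ≠ 0 := ne_of_gt hs
    have hscale : fderiv ℝ f (s • u) u = s⁻¹ • f (s • u) := by
      rw [← euler (s • u), map_smul, inv_smul_smul₀ hs0]
    have h := (hasDerivAt_inv hs0).smul (hasDerivAt_comp_smul_const (hf (s • u)))
    rwa [hscale, smul_smul, ← mul_inv, ← sq, neg_smul, add_neg_cancel] at h
  have hconst := isOpen_Ioi.is_const_of_deriv_eq_zero isPreconnected_Ioi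
    (fun s hs => (hderiv s hs).differentiableAt.differentiableWithinAt)
    (fun s hs => (hderiv s hs).deriv) (mem_Ioi.2 ht) (mem_Ioi.2 one_pos)
  simp only [inv_one, one_smul] at hconst
  rw [← hconst, smul_inv_smul₀ (ne_of_gt ht)]

theorem smul_eq_iff_fderiv_apply_self {f : E → F} (hf : Differentiable ℝ f) :
    (∀ t : ℝ, 0 < t → ∀ u, f (t • u) = t • f u) ↔ ∀ u, fderiv ℝ f u u = f u :=
  ⟨fun hom u => fderiv_apply_self_of_smul_eq (hf u) fun t ht => hom t ht u,
    fun euler _ ht => smul_eq_of_fderiv_apply_self hf euler ht⟩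

end Homogeneous

section LinearizedConnection

variable {n m : ℕ} (Γ : Fin n → EE n m → (Fin m → ℝ))

theorem Dlin_hl_snd (X : EE n m → (Fin n → ℝ)) (p : EE n m) :
    Dlin Γ (hl Γ X) (fun q => q.2) p
      = ∑ i, X p i • (fderiv ℝ (fun u => Γ i (p.1, u)) p.2 p.2 - Γ i p) := by
  simp only [Dlin, hl, fderiv_snd, coe_snd', smul_sub, Finset.sum_sub_distrib]
  abel

theorem kc_lieBr_liouville_hl {X : EE n m → (Fin n → ℝ)} {p : EE n m}
    (hΓ : ∀ i, DifferentiableAt ℝ (Γ i) p) (hX : DifferentiableAt ℝ X p) :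
    kc Γ (lieBr (vl fun q => q.2) (hl Γ X)) p
      = ∑ i, X p i • (Γ i p - fderiv ℝ (fun u => Γ i (p.1, u)) p.2 p.2) := by
  have hliouville : fderiv ℝ (vl (fun q : EE n m => q.2)) p
      = (inr ℝ (Fin n → ℝ) (Fin m → ℝ)).comp (snd ℝ (Fin n → ℝ) (Fin m → ℝ)) :=
    ((inr ℝ (Fin n → ℝ) (Fin m → ℝ)).comp (snd ℝ (Fin n → ℝ) (Fin m → ℝ))).fderiv
  have hterm : ∀ i, HasFDerivAt (fun q => X q i • Γ i q)
      (X p i • fderiv ℝ (Γ i) p + ((proj i).comp (fderiv ℝ X p)).smulRight (Γ i p)) p :=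
    fun i => ((proj i).hasFDerivAt.comp p hX.hasFDerivAt).smul (hΓ i).hasFDerivAt
  have hhl : HasFDerivAt (hl Γ X) ((fderiv ℝ X p).prod
      (-∑ i, (X p i • fderiv ℝ (Γ i) p + ((proj i).comp (fderiv ℝ X p)).smulRight (Γ i p)))) p :=
    hX.hasFDerivAt.prodMk (HasFDerivAt.fun_sum fun i _ => hterm i).neg
  have hpartial : ∀ i, fderiv ℝ (fun u => Γ i (p.1, u)) p.2 p.2 = fderiv ℝ (Γ i) p (0, p.2) :=
    fun i => fderiv_comp_prodMk_right_apply (hΓ i) p.2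
  simp only [kc, lieBr, hliouville, hhl.fderiv, vl, hl, hpartial, prod_apply, comp_apply,
    coe_snd', inr_apply, neg_apply, FunLike.coe_sum, Finset.sum_apply, add_apply, FunLike.coe_smul,
    Pi.smul_apply, smulRight_apply, proj_apply, Prod.snd_sub, Prod.fst_sub, sub_zero,
    smul_sub, Finset.sum_add_distrib, Finset.sum_sub_distrib]
  abel

theorem Dlin_hl_snd_eq_neg_kc_lieBr {X : EE n m → (Fin n → ℝ)} {p : EE n m}
    (hΓ : ∀ i, DifferentiableAt ℝ (Γ i) p) (hX : DifferentiableAt ℝ X p) :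
    Dlin Γ (hl Γ X) (fun q => q.2) p = -(kc Γ (lieBr (vl fun q => q.2) (hl Γ X)) p) := by
  rw [Dlin_hl_snd, kc_lieBr_liouville_hl Γ hΓ hX, ← Finset.sum_neg_distrib]
  simp only [← smul_neg, neg_sub]

theorem Dlin_hl_snd_eq_zero_iff :
    (∀ (X : EE n m → (Fin n → ℝ)) (p : EE n m), Dlin Γ (hl Γ X) (fun q => q.2) p = 0) ↔
      ∀ i (p : EE n m), fderiv ℝ (fun u => Γ i (p.1, u)) p.2 p.2 = Γ i p := by
  simp only [Dlin_hl_snd]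
  constructor
  · intro h i p
    -- test against the constant field `∂/∂xⁱ`
    simpa [Pi.single_apply, sub_eq_zero] using h (fun _ => Pi.single i 1) p
  · intro euler X p
    simp only [euler, sub_self, smul_zero, Finset.sum_const_zero]

end LinearizedConnection

/-- `D_{X^H} 𝕀 = −κ(𝓛_Δ X^H)` where `Δ = 𝕀^V` is the Liouville vector field
(here `vl (fun q => q.2)`), and `D_{X^H} 𝕀 = 0` for all `X` iff the connection is
homogeneous, i.e. `Γᵢ(x, λ•u) = λ•Γᵢ(x, u)` for all `λ > 0` (invariance of the horizontal
distribution under the dilations `a ↦ e^s a`). -/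
theorem tension_and_homogeneity {n m : ℕ}
    (Γ : Fin n → EE n m → (Fin m → ℝ)) (hΓ : ∀ i, ContDiff ℝ (⊤ : ℕ∞) (Γ i)) :
    (∀ X : EE n m → (Fin n → ℝ), ContDiff ℝ (⊤ : ℕ∞) X → ∀ p : EE n m,
        Dlin Γ (hl Γ X) (fun q => q.2) p
          = -(kc Γ (lieBr (vl fun q => q.2) (hl Γ X)) p)) ∧
    ((∀ (X : EE n m → (Fin n → ℝ)) (p : EE n m),
        Dlin Γ (hl Γ X) (fun q => q.2) p = 0) ↔
      ∀ lam : ℝ, 0 < lam → ∀ (x : Fin n → ℝ) (u : Fin m → ℝ) (i : Fin n),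
        Γ i (x, lam • u) = lam • Γ i (x, u)) := by
  have hΓd : ∀ i, Differentiable ℝ (Γ i) := fun i => (hΓ i).differentiable (by simp)
  refine ⟨fun X hX p => Dlin_hl_snd_eq_neg_kc_lieBr Γ (fun i => hΓd i p)
    (hX.differentiable (by simp) p), ?_⟩
  have hfiber : ∀ i (x : Fin n → ℝ), Differentiable ℝ fun u => Γ i (x, u) :=
    fun i x => (hΓd i).comp (differentiable_const x |>.prodMk differentiable_id)
  rw [Dlin_hl_snd_eq_zero_iff]
  constructor
  · intro euler lam hlam x u i
    exact ((smul_eq_iff_fderiv_apply_self (hfiber i x)).2 (fun u => euler i (x, u))) lam hlam u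
  · intro hom i p
    exact (smul_eq_iff_fderiv_apply_self (hfiber i p.1)).1 (fun t ht u => hom t ht p.1 u i) p.2
end
end

section
/- For the linearized connection D on π*E → E, along any curve contained in a single fibre E_m of E, a section σ of π*E is parallel if and only if σ is constant along the curve; hence parallel transport along vertical curves is the canonical complete parallelism of the vector space E_m, independent of the curve joining two points of the fibre. -/
/-- For the linearized connection `D` on `π*E → E`, along a curve `γ`
contained in a single fibre `E_m` (modelled, via a trivialization `E = M × F`, as a curve
`γ : ℝ → F` over the fixed base point `m`), a section `σ` of `π*E` is parallel iff `σ` is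
constant along the curve.  Since `D_{γ̇(t)}σ = κ(d/dt (σ∘γ)(t))` and along vertical curves
the vertical coefficients of `D` vanish, the parallel condition is
`fderiv σ(m,·) (γ t) (γ'(t)) = 0`; the conclusion shows that parallel transport along
vertical curves is the canonical complete parallelism of the fibre, independent of the
curve joining two points. -/
theorem parallel_along_vertical_curve_iff_constant
    {M F : Type*} [NormedAddCommGroup F] [NormedSpace ℝ F]
    (σ : M × F → F) (m : M) (γ : ℝ → F)
    (hσ : Differentiable ℝ (fun v => σ (m, v)))
    (hγ : Differentiable ℝ γ) :
    (∀ t : ℝ, fderiv ℝ (fun v => σ (m, v)) (γ t) (deriv γ t) = 0) ↔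
      (∀ t s : ℝ, σ (m, γ t) = σ (m, γ s)) := by
  have key : ∀ t : ℝ, HasDerivAt (fun u => σ (m, γ u))
      (fderiv ℝ (fun v => σ (m, v)) (γ t) (deriv γ t)) t := fun t =>
    ((hσ (γ t)).hasFDerivAt).comp_hasDerivAt t (hγ t).hasDerivAt
  constructor
  · intro h t s
    have hc : ∀ u : ℝ, deriv (fun u => σ (m, γ u)) u = 0 := fun u => by
      rw [(key u).deriv, h u]
    have := is_const_of_deriv_eq_zero (f := fun u => σ (m, γ u))
      (fun u => (key u).differentiableAt) hc t s
    exact this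
  · intro h t
    have hc : (fun u => σ (m, γ u)) = fun _ => σ (m, γ t) := funext fun u => h u t
    have : deriv (fun u => σ (m, γ u)) t = 0 := by rw [hc]; simp
    rw [(key t).deriv] at this
    exact this
end

section
/- For the linearization D of a nonlinear connection on an affine bundle π : A → M, the nonlinear connection is recovered via D_U 𝕀 = κ(U) for every U ∈ 𝔛(A), where 𝕀 is the canonical section of π*A ⊂ π*Ã and κ the connector of the nonlinear connection. -/
noncomputable section

/-- Total space of the (locally trivialized) affine bundle `π : A = ℝⁿ × ℝᵐ → M = ℝⁿ`,
with affine fibre coordinates `y`.  Its linear span `Ã` has fibre `ℝ × ℝᵐ` with the extra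
coordinate `z⁰` (so `A = {z⁰ = 1}` and the model vector bundle is `V = {z⁰ = 0}`). -/
abbrev AA (n m : ℕ) := (Fin n → ℝ) × (Fin m → ℝ)

/-- The linearization, restricted to `A`, of the homogeneous extension to `Ã − V` of the
nonlinear connection on `A` with coefficients `Γ` (so that `H_i = ∂/∂xⁱ − Γᴬᵢ ∂/∂yᴬ`);
it acts on sections `σ = (σ⁰, σᴬ)` of `π*Ã → A` by
`D_U σ = U(σ⁰) e₀ + {Uⁱ[H_i(σᴬ) + Γᴬᵢ₀ σ⁰ + ΓᴬᵢB σᴮ] + U^C V_C(σᴬ)} e_A`,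
with `ΓᴬᵢB = ∂Γᴬᵢ/∂yᴮ` and `Γᴬᵢ₀ = Γᴬᵢ − yᴮ ΓᴬᵢB`. -/
def Daff {n m : ℕ} (Γ : Fin n → AA n m → (Fin m → ℝ))
    (U : AA n m → AA n m) (σ : AA n m → ℝ × (Fin m → ℝ)) (p : AA n m) :
    ℝ × (Fin m → ℝ) :=
  fderiv ℝ σ p (U p) + ∑ i, (U p).1 i •
    ((0 : ℝ),
      (σ p).1 • (Γ i p - fderiv ℝ (fun u => Γ i (p.1, u)) p.2 p.2)
        + fderiv ℝ (fun u => Γ i (p.1, u)) p.2 (σ p).2)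

/-! The canonical section `𝕀 = (1, y)` has constant `z⁰`-component and identity fibre
component, so `U(𝕀) = (0, U_V)`.  In the connection term, evaluating at `σ = 𝕀` turns
`Γᴬᵢ₀ σ⁰ + ΓᴬᵢB σᴮ` into `Γᴬᵢ₀ + ΓᴬᵢB yᴮ = Γᴬᵢ`: the homogeneous extension has no tension. -/

theorem fderiv_const_prodMk_snd {𝕜 E F G : Type*} [NontriviallyNormedField 𝕜]
    [NormedAddCommGroup E] [NormedSpace 𝕜 E] [NormedAddCommGroup F] [NormedSpace 𝕜 F]
    [NormedAddCommGroup G] [NormedSpace 𝕜 G] (c : G) (p v : E × F) :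
    fderiv 𝕜 (fun q : E × F => (c, q.2)) p v = (0, v.2) := by
  rw [((hasFDerivAt_const c p).prodMk hasFDerivAt_snd).fderiv]
  rfl

/-- For the linearization `D` of a nonlinear connection on an affine bundle
`π : A → M`, the nonlinear connection is recovered via `D_U 𝕀 = κ(U)`, where
`𝕀 = (1, y)` is the canonical section of `π*A ⊂ π*Ã` and `κ(U) = U_V + Σᵢ Uⁱ Γᵢ` is the
connector of the nonlinear connection (included in `π*Ã` as `(0, κ(U))`). -/
theorem affine_linearization_recovers_connector {n m : ℕ}
    (Γ : Fin n → AA n m → (Fin m → ℝ))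
    (U : AA n m → AA n m) (p : AA n m) :
    Daff Γ U (fun q => ((1 : ℝ), q.2)) p
      = ((0 : ℝ), (U p).2 + ∑ i, (U p).1 i • Γ i p) := by
  simp only [Daff, fderiv_const_prodMk_snd, one_smul, sub_add_cancel]
  ext <;> simp [Prod.fst_sum, Prod.snd_sum]
end
end

section
/- Let Hor be a symmetric nonlinear connection on T*M (i.e. the horizontal subbundle is Lagrangian for ω₀). Then for every f ∈ C^∞(T*M) the Hamiltonian vector field decomposes as X_f = (d^V f)^H − (d^H f)^V. Conversely, if this identity holds for all f, then the connection is symmetric. -/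
noncomputable section

/-- The cotangent bundle `T*M` of `M = ℝⁿ` in canonical coordinates `(x, p)`. -/
abbrev TT (n : ℕ) := (Fin n → ℝ) × (Fin n → ℝ)

/-- The canonical symplectic form `ω₀ = −dθ₀ = dxⁱ ∧ dpᵢ` of `T*M`. -/
def ωc {n : ℕ} (a b : TT n) : ℝ := (∑ i, a.1 i * b.2 i) - ∑ i, b.1 i * a.2 i

/-- Horizontal lift of a vector field `X` along `π_M` for the Ehresmann connection with
coefficients `Γ` (so `H_i = ∂/∂xⁱ − Γᵢⱼ ∂/∂pⱼ`, `Γᵢⱼ = Γ i p j`). -/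
def hlC {n : ℕ} (Γ : Fin n → TT n → (Fin n → ℝ)) (X : TT n → (Fin n → ℝ))
    (p : TT n) : TT n :=
  (X p, fun j => -(∑ i, X p i * Γ i p j))

/-- The horizontal differential `d^H f` of `f ∈ C^∞(T*M)`: `⟨d^H f, X⟩ = X^H(f)`,
so `(d^H f)ᵢ = H_i(f)`. -/
def dHf {n : ℕ} (Γ : Fin n → TT n → (Fin n → ℝ)) (f : TT n → ℝ) (p : TT n) :
    Fin n → ℝ :=
  fun i => fderiv ℝ f p (Pi.single i 1, -(Γ i p))

/-- The vertical differential `d^V f` of `f ∈ C^∞(T*M)`: `⟨α, d^V f⟩ = α^V(f)`,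
so `(d^V f)ⁱ = ∂f/∂pᵢ`. -/
def dVf {n : ℕ} (f : TT n → ℝ) (p : TT n) : Fin n → ℝ :=
  fun i => fderiv ℝ f p (0, Pi.single i 1)

/-- For a symmetric nonlinear connection on `T*M` (horizontal subbundle
Lagrangian for `ω₀`), the Hamiltonian vector field `X_f` (characterized by
`i_{X_f}ω₀ = df`) decomposes as `X_f = (d^V f)^H − (d^H f)^V`; conversely, if this
identity holds for every smooth `f`, the connection is symmetric. -/
theorem hamiltonian_field_decomposition_iff_symmetric {n : ℕ}
    (Γ : Fin n → TT n → (Fin n → ℝ))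
    (Xham : (TT n → ℝ) → TT n → TT n)
    (hXham : ∀ (f : TT n → ℝ) (p : TT n), DifferentiableAt ℝ f p →
      ∀ w : TT n, ωc (Xham f p) w = fderiv ℝ f p w) :
    (∀ (X Y : TT n → (Fin n → ℝ)) (p : TT n), ωc (hlC Γ X p) (hlC Γ Y p) = 0) ↔
      (∀ f : TT n → ℝ, Differentiable ℝ f → ∀ p : TT n,
        Xham f p = hlC Γ (dVf f) p - ((0 : Fin n → ℝ), dHf Γ f p)) := by
  -- evaluation of ωc against coordinate vectors
  have hωfst : ∀ (v : TT n) (i : Fin n),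
      ωc v ((0 : Fin n → ℝ), (Pi.single i (1:ℝ) : Fin n → ℝ)) = v.1 i := by
    intro v i
    simp [ωc, Pi.single_apply, mul_ite]
  have hωsnd : ∀ (v : TT n) (i : Fin n),
      ωc v ((Pi.single i (1:ℝ) : Fin n → ℝ), (0 : Fin n → ℝ)) = -(v.2 i) := by
    intro v i
    simp [ωc, Pi.single_apply, ite_mul]
  -- linearity of the vertical derivative
  have hlin : ∀ (f : TT n → ℝ) (p : TT n) (g : Fin n → ℝ),
      fderiv ℝ f p ((0 : Fin n → ℝ), g) = ∑ i, g i * dVf f p i := by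
    intro f p g
    have hg : ((0 : Fin n → ℝ), g)
        = ∑ i, g i • (((0 : Fin n → ℝ), (Pi.single i (1:ℝ) : Fin n → ℝ)) : TT n) := by
      ext j
      · simp [Prod.fst_sum]
      · simp [Prod.snd_sum, Finset.sum_apply, Pi.single_apply]
    rw [hg, map_sum]
    refine Finset.sum_congr rfl fun i _ => ?_
    rw [map_smul, smul_eq_mul]
    rfl
  constructor
  · intro hsym f hf p
    -- symmetry of the connection coefficients
    have hΓ : ∀ i j, Γ i p j = Γ j p i := by
      intro i j
      have h := hsym (fun _ => (Pi.single i (1:ℝ) : Fin n → ℝ))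
        (fun _ => (Pi.single j (1:ℝ) : Fin n → ℝ)) p
      simp [ωc, hlC, Pi.single_apply, ite_mul] at h
      linarith
    have h1 : ∀ i, (Xham f p).1 i = dVf f p i := by
      intro i
      have := hXham f p (hf p) ((0 : Fin n → ℝ), (Pi.single i (1:ℝ) : Fin n → ℝ))
      rw [hωfst] at this
      exact this
    have h2 : ∀ i, (Xham f p).2 i
        = -(fderiv ℝ f p ((Pi.single i (1:ℝ) : Fin n → ℝ), (0 : Fin n → ℝ))) := by
      intro i
      have := hXham f p (hf p) ((Pi.single i (1:ℝ) : Fin n → ℝ), (0 : Fin n → ℝ))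
      rw [hωsnd] at this
      linarith
    have hsplit : ∀ j : Fin n,
        fderiv ℝ f p ((Pi.single j (1:ℝ) : Fin n → ℝ), -(Γ j p))
          = fderiv ℝ f p ((Pi.single j (1:ℝ) : Fin n → ℝ), (0 : Fin n → ℝ))
            - ∑ i, Γ j p i * dVf f p i := by
      intro j
      have hw : ((Pi.single j (1:ℝ) : Fin n → ℝ), -(Γ j p))
          = ((Pi.single j (1:ℝ) : Fin n → ℝ), (0 : Fin n → ℝ))
            - ((0 : Fin n → ℝ), Γ j p) := by
        ext m <;> simp
      rw [hw, map_sub, hlin]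
    ext j
    · rw [h1]
      simp [hlC]
    · rw [h2]
      show _ = (hlC Γ (dVf f) p).2 j - dHf Γ f p j
      rw [dHf]
      simp only [hlC]
      rw [hsplit j]
      have hswap : ∑ i, dVf f p i * Γ i p j = ∑ i, Γ j p i * dVf f p i := by
        refine Finset.sum_congr rfl fun i _ => ?_
        rw [hΓ i j, mul_comm]
      rw [hswap]
      ring
  · intro hdec X Y p
    -- derive symmetry of Γ at p from the decomposition for the linear functions q ↦ q.2 k
    have hΓ : ∀ k j, Γ k p j = Γ j p k := by
      intro k j
      set L : TT n →L[ℝ] ℝ :=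
        (ContinuousLinearMap.proj k).comp
          (ContinuousLinearMap.snd ℝ (Fin n → ℝ) (Fin n → ℝ)) with hL
      have hfL : (fun q : TT n => q.2 k) = ⇑L := rfl
      have hfd : Differentiable ℝ (fun q : TT n => q.2 k) := by
        rw [hfL]; exact L.differentiable
      have hfder : ∀ (q w : TT n), fderiv ℝ (fun q : TT n => q.2 k) q w = w.2 k := by
        intro q w
        rw [hfL, L.fderiv]
        rfl
      have h := congrArg (fun v : TT n => v.2 j) (hdec (fun q : TT n => q.2 k) hfd p)
      have h2 : (Xham (fun q : TT n => q.2 k) p).2 j = 0 := by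
        have h3 := hXham (fun q : TT n => q.2 k) p (hfd p)
          ((Pi.single j (1:ℝ) : Fin n → ℝ), (0 : Fin n → ℝ))
        rw [hωsnd, hfder] at h3
        simp at h3
        linarith
      simp only [h2] at h
      -- compute the right-hand side
      have hdV : ∀ i, dVf (fun q : TT n => q.2 k) p i = (Pi.single i (1:ℝ) : Fin n → ℝ) k := by
        intro i
        rw [dVf, hfder]
      have hdH : dHf Γ (fun q : TT n => q.2 k) p j = -(Γ j p k) := by
        rw [dHf, hfder]
        rfl
      have hRHS : ((hlC Γ (dVf (fun q : TT n => q.2 k)) p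
          - ((0 : Fin n → ℝ), dHf Γ (fun q : TT n => q.2 k) p)) : TT n).2 j
          = -(Γ k p j) + Γ j p k := by
        show (hlC Γ (dVf (fun q : TT n => q.2 k)) p).2 j
            - dHf Γ (fun q : TT n => q.2 k) p j = _
        rw [hdH]
        simp only [hlC]
        have : ∑ i, dVf (fun q : TT n => q.2 k) p i * Γ i p j = Γ k p j := by
          rw [Finset.sum_congr rfl fun i _ => by rw [hdV i]]
          simp [Pi.single_apply, ite_mul]
        rw [this]
        ring
      rw [hRHS] at h
      linarith
    -- conclude the horizontal subspace is Lagrangian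
    simp only [ωc, hlC]
    rw [sub_eq_zero]
    simp only [mul_neg, Finset.mul_sum, ← Finset.sum_neg_distrib]
    rw [Finset.sum_comm]
    refine Finset.sum_congr rfl fun i _ => Finset.sum_congr rfl fun j _ => ?_
    rw [hΓ j i]
    ring
end
end

section
/- For a symmetric nonlinear connection on T*M, the Poisson bracket of f, g ∈ C^∞(T*M) is {f,g} = ⟨d^H f, d^V g⟩ − ⟨d^H g, d^V f⟩; conversely if this formula holds for all f, g then the connection is symmetric. Moreover, for a symmetric connection, the curvature satisfies the cyclic identity ⟨R(X,Y), Z⟩ + ⟨R(Y,Z), X⟩ + ⟨R(Z,X), Y⟩ = 0 for all X, Y, Z ∈ Γ(π_M*TM). -/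
noncomputable section

/-- The canonical Hamiltonian vector field of `f` on `T*ℝⁿ`: `i_{X_f}ω₀ = df`, so
`X_f = (∂f/∂p, −∂f/∂x)`. -/
def XhamD {n : ℕ} (f : TT n → ℝ) (p : TT n) : TT n :=
  (dVf f p, fun i => -(fderiv ℝ f p (Pi.single i 1, 0)))

/-- Lie bracket of vector fields on `T*M`. -/
def lieC {n : ℕ} (U W : TT n → TT n) (p : TT n) : TT n :=
  fderiv ℝ W p (U p) - fderiv ℝ U p (W p)

/-- Connector of the nonlinear connection on `T*M`. -/
def kcC {n : ℕ} (Γ : Fin n → TT n → (Fin n → ℝ)) (W : TT n → TT n) (p : TT n) :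
    Fin n → ℝ :=
  fun j => (W p).2 j + ∑ i, (W p).1 i * Γ i p j

/-- Curvature `R(X,Y) = κ([X^H, Y^H])` of the nonlinear connection on `T*M`. -/
def RC {n : ℕ} (Γ : Fin n → TT n → (Fin n → ℝ)) (X Y : TT n → (Fin n → ℝ))
    (p : TT n) : Fin n → ℝ :=
  kcC Γ (lieC (hlC Γ X) (hlC Γ Y)) p

/-!
In canonical coordinates `X^H = (X, -Γ X)`, so `ω₀(X^H, Y^H) = Σ Xᵢ Yⱼ (Γᵢⱼ - Γⱼᵢ)` and the
connection is symmetric exactly when `Γᵢⱼ = Γⱼᵢ`. Since `d^H f = ∂ₓ f - Γ d^V f`, the right-hand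
side of the bracket formula equals `{f, g} + ω₀((d^V f)^H, (d^V g)^H)`; testing it on functions
linear in the fibres recovers every `ω₀(X^H, Y^H)`, which gives the converse.

For the curvature, the connector at `p` annihilates `Y^H(p)`, so differentiating `κ_p ∘ Y^H` at
`p` only sees the derivative of `Γ`: `⟨R(X,Y), Z⟩ = T(X,Y,Z) - T(Y,X,Z)` with
`T(u,v,w) = Σ uₐ v_b wⱼ H_b Γₐⱼ`. Symmetry of `Γ` makes `T` symmetric in `u` and `w`, and the
cyclic sum cancels.
-/

section

variable {n : ℕ} (Γ : Fin n → TT n → (Fin n → ℝ))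

def SymmetricCoeffs : Prop := ∀ i j p, Γ i p j = Γ j p i

lemma ωc_hlC_eq_sum (X Y : TT n → (Fin n → ℝ)) (p : TT n) :
    ωc (hlC Γ X p) (hlC Γ Y p) = ∑ i, ∑ j, X p i * Y p j * (Γ i p j - Γ j p i) := by
  simp only [ωc, hlC, mul_sub, Finset.sum_sub_distrib, mul_neg, Finset.sum_neg_distrib,
    Finset.mul_sum]
  rw [sub_neg_eq_add, neg_add_eq_sub, Finset.sum_comm (f := fun x i => Y p x * _)]
  congr 1 <;> exact Finset.sum_congr rfl fun _ _ => Finset.sum_congr rfl fun _ _ => by ring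

lemma symmetricCoeffs_iff_ωc_hlC_eq_zero :
    SymmetricCoeffs Γ ↔ ∀ X Y p, ωc (hlC Γ X p) (hlC Γ Y p) = 0 := by
  refine ⟨fun hs X Y p => ?_, fun h a b p => ?_⟩
  · simp [ωc_hlC_eq_sum, hs _ _ p]
  · have hab := h (fun _ => Pi.single a 1) (fun _ => Pi.single b 1) p
    simpa [ωc_hlC_eq_sum, Pi.single_apply, sub_eq_zero] using hab

omit Γ in
lemma clm_apply_mk_eq_sum (L : TT n →L[ℝ] ℝ) (u w : Fin n → ℝ) :
    L (u, w) = ∑ i, u i * L (Pi.single i 1, 0) + ∑ i, w i * L (0, Pi.single i 1) := by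
  have hsplit : ((u, w) : TT n) = ∑ i, u i • ((Pi.single i 1, 0) : TT n)
      + ∑ i, w i • ((0, Pi.single i 1) : TT n) := by
    ext j <;> simp [Prod.fst_sum, Prod.snd_sum, Finset.sum_apply, Pi.single_apply]
  rw [hsplit]
  simp only [map_add, map_sum, map_smul, smul_eq_mul]

lemma dHf_eq_sub (f : TT n → ℝ) (p : TT n) (i : Fin n) :
    dHf Γ f p i = fderiv ℝ f p (Pi.single i 1, 0) - ∑ j, Γ i p j * dVf f p j := by
  rw [dHf, clm_apply_mk_eq_sum]
  simp [Pi.single_apply, dVf, sub_eq_add_neg]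

lemma fderiv_apply_hlC (f : TT n → ℝ) (Y : TT n → (Fin n → ℝ)) (p : TT n) :
    fderiv ℝ f p (hlC Γ Y p) = ∑ b, Y p b * dHf Γ f p b := by
  rw [hlC, clm_apply_mk_eq_sum]
  simp only [dHf_eq_sub, dVf, mul_sub, Finset.sum_sub_distrib, Finset.mul_sum, neg_mul,
    Finset.sum_neg_distrib, Finset.sum_mul, ← sub_eq_add_neg]
  rw [Finset.sum_comm (f := fun x i => Y p i * Γ i p x * _)]
  congr 1
  exact Finset.sum_congr rfl fun _ _ => Finset.sum_congr rfl fun _ _ => by ring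

lemma ωc_XhamD (f g : TT n → ℝ) (p : TT n) :
    ωc (XhamD f p) (XhamD g p)
      = (∑ i, fderiv ℝ f p (Pi.single i 1, 0) * dVf g p i)
        - ∑ i, fderiv ℝ g p (Pi.single i 1, 0) * dVf f p i := by
  simp only [ωc, XhamD, mul_neg, Finset.sum_neg_distrib, mul_comm]
  ring

lemma sum_dHf_mul_dVf_sub_eq (f g : TT n → ℝ) (p : TT n) :
    (∑ i, dHf Γ f p i * dVf g p i) - ∑ i, dHf Γ g p i * dVf f p i
      = ωc (XhamD f p) (XhamD g p)
        + ωc (hlC Γ (fun _ => dVf f p) p) (hlC Γ (fun _ => dVf g p) p) := by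
  simp only [ωc_XhamD, ωc_hlC_eq_sum, dHf_eq_sub, sub_mul, Finset.sum_sub_distrib,
    Finset.sum_mul, mul_sub]
  rw [Finset.sum_comm (f := fun x i => Γ x p i * dVf f p i * dVf g p x)]
  simp only [mul_comm, mul_left_comm]
  ring

def fiberLinear (v : Fin n → ℝ) : TT n →L[ℝ] ℝ :=
  ∑ i, v i • (ContinuousLinearMap.proj i).comp (ContinuousLinearMap.snd ℝ _ _)

omit Γ in
lemma dVf_fiberLinear (v : Fin n → ℝ) (q : TT n) : dVf (fiberLinear v) q = v := by
  ext j
  simp [dVf, fiberLinear, ContinuousLinearMap.fderiv, Pi.single_apply]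

lemma poisson_eq_of_ωc_hlC_eq_zero (hs : ∀ X Y p, ωc (hlC Γ X p) (hlC Γ Y p) = 0)
    (f g : TT n → ℝ) (p : TT n) :
    ωc (XhamD f p) (XhamD g p)
      = (∑ i, dHf Γ f p i * dVf g p i) - ∑ i, dHf Γ g p i * dVf f p i := by
  rw [sum_dHf_mul_dVf_sub_eq, hs, add_zero]

lemma ωc_hlC_eq_zero_of_poisson
    (h : ∀ f g : TT n → ℝ, Differentiable ℝ f → Differentiable ℝ g → ∀ p : TT n,
      ωc (XhamD f p) (XhamD g p)
        = (∑ i, dHf Γ f p i * dVf g p i) - ∑ i, dHf Γ g p i * dVf f p i)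
    (X Y : TT n → (Fin n → ℝ)) (p : TT n) : ωc (hlC Γ X p) (hlC Γ Y p) = 0 := by
  have hXY := h (fiberLinear (X p)) (fiberLinear (Y p)) (fiberLinear _).differentiable
    (fiberLinear _).differentiable p
  rw [sum_dHf_mul_dVf_sub_eq, dVf_fiberLinear, dVf_fiberLinear] at hXY
  exact add_eq_left.mp hXY.symm

def connectorCLM (p : TT n) (j : Fin n) : TT n →L[ℝ] ℝ :=
  (ContinuousLinearMap.proj (R := ℝ) (φ := fun _ : Fin n => ℝ) j).comp
      (ContinuousLinearMap.snd ℝ _ _)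
    + ∑ i, Γ i p j • (ContinuousLinearMap.proj i).comp (ContinuousLinearMap.fst ℝ _ _)

lemma kcC_apply (W : TT n → TT n) (p : TT n) (j : Fin n) :
    kcC Γ W p j = connectorCLM Γ p j (W p) := by
  simp [kcC, connectorCLM, mul_comm]

lemma connectorCLM_hlC (Y : TT n → (Fin n → ℝ)) (p q : TT n) (j : Fin n) :
    connectorCLM Γ p j (hlC Γ Y q) = ∑ i, Y q i * (Γ i p j - Γ i q j) := by
  simp [connectorCLM, hlC, mul_sub, mul_comm]
  ring

lemma differentiableAt_hlC {Y : TT n → (Fin n → ℝ)} {p : TT n}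
    (hΓ : ∀ i, DifferentiableAt ℝ (Γ i) p) (hY : DifferentiableAt ℝ Y p) :
    DifferentiableAt ℝ (hlC Γ Y) p := by
  unfold hlC
  fun_prop

lemma connectorCLM_fderiv_hlC {Y : TT n → (Fin n → ℝ)} {p : TT n}
    (hΓ : ∀ i, DifferentiableAt ℝ (Γ i) p) (hY : DifferentiableAt ℝ Y p) (j : Fin n)
    (v : TT n) :
    connectorCLM Γ p j (fderiv ℝ (hlC Γ Y) p v)
      = -∑ i, Y p i * fderiv ℝ (fun q => Γ i q j) p v := by
  have hL := (connectorCLM Γ p j).hasFDerivAt.comp p (differentiableAt_hlC Γ hΓ hY).hasFDerivAt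
  simp only [Function.comp_def, connectorCLM_hlC] at hL
  have hR : HasFDerivAt (fun q => ∑ i, Y q i * (Γ i p j - Γ i q j))
      (∑ i, (Y p i • (0 - fderiv ℝ (fun q => Γ i q j) p)
        + (Γ i p j - Γ i p j) • fderiv ℝ (fun q => Y q i) p)) p := by
    refine HasFDerivAt.fun_sum fun i _ => HasFDerivAt.fun_mul ?_ ?_
    · exact (differentiableAt_pi.1 hY i).hasFDerivAt
    · exact (hasFDerivAt_const _ _).sub (differentiableAt_pi.1 (hΓ i) j).hasFDerivAt
  simpa using congrArg (· v) (hL.unique hR)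

lemma RC_apply {X Y : TT n → (Fin n → ℝ)} {p : TT n}
    (hΓ : ∀ i, DifferentiableAt ℝ (Γ i) p) (hX : DifferentiableAt ℝ X p)
    (hY : DifferentiableAt ℝ Y p) (j : Fin n) :
    RC Γ X Y p j = (∑ a, X p a * fderiv ℝ (fun q => Γ a q j) p (hlC Γ Y p))
      - ∑ a, Y p a * fderiv ℝ (fun q => Γ a q j) p (hlC Γ X p) := by
  rw [RC, kcC_apply, lieC, map_sub, connectorCLM_fderiv_hlC Γ hΓ hY,
    connectorCLM_fderiv_hlC Γ hΓ hX, neg_sub_neg]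

def horizDerivForm (p : TT n) (u v w : Fin n → ℝ) : ℝ :=
  ∑ j, ∑ a, ∑ b, u a * v b * w j * dHf Γ (fun q => Γ a q j) p b

lemma sum_RC_mul {X Y : TT n → (Fin n → ℝ)} {p : TT n}
    (hΓ : ∀ i, DifferentiableAt ℝ (Γ i) p) (hX : DifferentiableAt ℝ X p)
    (hY : DifferentiableAt ℝ Y p) (w : Fin n → ℝ) :
    ∑ j, RC Γ X Y p j * w j
      = horizDerivForm Γ p (X p) (Y p) w - horizDerivForm Γ p (Y p) (X p) w := by
  simp only [RC_apply Γ hΓ hX hY, fderiv_apply_hlC, horizDerivForm, sub_mul,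
    Finset.sum_sub_distrib, Finset.mul_sum, Finset.sum_mul]
  congr 1 <;> exact Finset.sum_congr rfl fun _ _ => Finset.sum_congr rfl fun _ _ =>
    Finset.sum_congr rfl fun _ _ => by ring

lemma horizDerivForm_comm (hs : SymmetricCoeffs Γ) (p : TT n) (u v w : Fin n → ℝ) :
    horizDerivForm Γ p u v w = horizDerivForm Γ p w v u := by
  unfold horizDerivForm
  rw [Finset.sum_comm]
  refine Finset.sum_congr rfl fun a _ => Finset.sum_congr rfl fun j _ =>
    Finset.sum_congr rfl fun b _ => ?_
  rw [show (fun q => Γ a q j) = fun q => Γ j q a from funext (hs a j)]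
  ring

lemma cyclic_sum_RC_mul (hs : SymmetricCoeffs Γ) {X Y Z : TT n → (Fin n → ℝ)} {p : TT n}
    (hΓ : ∀ i, DifferentiableAt ℝ (Γ i) p) (hX : DifferentiableAt ℝ X p)
    (hY : DifferentiableAt ℝ Y p) (hZ : DifferentiableAt ℝ Z p) :
    (∑ j, RC Γ X Y p j * Z p j) + (∑ j, RC Γ Y Z p j * X p j)
      + (∑ j, RC Γ Z X p j * Y p j) = 0 := by
  rw [sum_RC_mul Γ hΓ hX hY, sum_RC_mul Γ hΓ hY hZ, sum_RC_mul Γ hΓ hZ hX,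
    horizDerivForm_comm Γ hs p (Y p) (X p), horizDerivForm_comm Γ hs p (Z p) (Y p),
    horizDerivForm_comm Γ hs p (X p) (Z p)]
  ring

end

/-- For a symmetric nonlinear connection on `T*M` the Poisson bracket is
`{f,g} = ⟨d^H f, d^V g⟩ − ⟨d^H g, d^V f⟩`; conversely this formula for all `f, g` forces
the connection to be symmetric; moreover, for a symmetric connection the curvature
satisfies the cyclic identity `Σ_{cyc} ⟨R(X,Y), Z⟩ = 0`. -/
theorem poisson_bracket_and_cyclic_curvature {n : ℕ}
    (Γ : Fin n → TT n → (Fin n → ℝ)) (hΓ : ∀ i, ContDiff ℝ (⊤ : ℕ∞) (Γ i)) :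
    ((∀ (X Y : TT n → (Fin n → ℝ)) (p : TT n), ωc (hlC Γ X p) (hlC Γ Y p) = 0) →
      ∀ (f g : TT n → ℝ), Differentiable ℝ f → Differentiable ℝ g → ∀ p : TT n,
        ωc (XhamD f p) (XhamD g p)
          = (∑ i, dHf Γ f p i * dVf g p i) - ∑ i, dHf Γ g p i * dVf f p i) ∧
    ((∀ (f g : TT n → ℝ), Differentiable ℝ f → Differentiable ℝ g → ∀ p : TT n,
        ωc (XhamD f p) (XhamD g p)
          = (∑ i, dHf Γ f p i * dVf g p i) - ∑ i, dHf Γ g p i * dVf f p i) →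
      ∀ (X Y : TT n → (Fin n → ℝ)) (p : TT n), ωc (hlC Γ X p) (hlC Γ Y p) = 0) ∧
    ((∀ (X Y : TT n → (Fin n → ℝ)) (p : TT n), ωc (hlC Γ X p) (hlC Γ Y p) = 0) →
      ∀ (X Y Z : TT n → (Fin n → ℝ)),
        ContDiff ℝ (⊤ : ℕ∞) X → ContDiff ℝ (⊤ : ℕ∞) Y → ContDiff ℝ (⊤ : ℕ∞) Z →
        ∀ p : TT n,
          (∑ j, RC Γ X Y p j * Z p j) + (∑ j, RC Γ Y Z p j * X p j)
            + (∑ j, RC Γ Z X p j * Y p j) = 0) := by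
  refine ⟨fun hs f g _ _ p => poisson_eq_of_ωc_hlC_eq_zero Γ hs f g p,
    ωc_hlC_eq_zero_of_poisson Γ, fun hs X Y Z hX hY hZ p => ?_⟩
  have hsymm := (symmetricCoeffs_iff_ωc_hlC_eq_zero Γ).2 hs
  exact cyclic_sum_RC_mul Γ hsymm (fun i => (hΓ i).differentiable (by simp) p)
    (hX.differentiable (by simp) p) (hY.differentiable (by simp) p)
    (hZ.differentiable (by simp) p)
end
end

section
/- Let Hor be a symmetric nonlinear connection on T*M and H ∈ C^∞(T*M) with d^H H = 0. Then every integral section α ∈ Γ(T*M) of Hor (i.e. Tα(v) = ξ^H(α(τ_M(v)), v) for all v ∈ TM) is a closed 1-form on which H is locally constant; i.e. α is a solution of the Hamilton–Jacobi equation for H. -/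
noncomputable section

/-! The integral-section condition says that the graph of `α` is tangent to `Hor`:
`(v, Tα v) = v^H(α x)`. In coordinates `∂ᵢαⱼ = −Γᵢⱼ`, and the Lagrangian condition applied to
the lifts of `∂ᵢ` and `∂ⱼ` reads `Γᵢⱼ = Γⱼᵢ`, so `dα = 0`. Along the graph,
`d(H ∘ α) v = dH(v^H) = ⟨d^H H, v⟩ = 0`. -/

theorem fderiv_graph_apply {E F G : Type*} [NormedAddCommGroup E] [NormedSpace ℝ E]
    [NormedAddCommGroup F] [NormedSpace ℝ F] [NormedAddCommGroup G] [NormedSpace ℝ G]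
    {H : E × F → G} {α : E → F} {x : E}
    (hH : DifferentiableAt ℝ H (x, α x)) (hα : DifferentiableAt ℝ α x) (v : E) :
    fderiv ℝ (fun y => H (y, α y)) x v = fderiv ℝ H (x, α x) (v, fderiv ℝ α x v) :=
  DFunLike.congr_fun
    (hH.hasFDerivAt.comp x ((hasFDerivAt_id x).prodMk hα.hasFDerivAt)).fderiv v

def IsSymmetricConnection {n : ℕ} (Γ : Fin n → TT n → (Fin n → ℝ)) : Prop :=
  ∀ (X Y : TT n → (Fin n → ℝ)) (p : TT n), ωc (hlC Γ X p) (hlC Γ Y p) = 0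

def IsIntegralSection {n : ℕ} (Γ : Fin n → TT n → (Fin n → ℝ))
    (α : (Fin n → ℝ) → (Fin n → ℝ)) : Prop :=
  ∀ x v : Fin n → ℝ, fderiv ℝ α x v = fun j => -∑ i, v i * Γ i (x, α x) j

section

variable {n : ℕ} {Γ : Fin n → TT n → (Fin n → ℝ)}

theorem ωc_hlC_single_single (Γ : Fin n → TT n → (Fin n → ℝ)) (p : TT n) (i j : Fin n) :
    ωc (hlC Γ (fun _ => Pi.single i 1) p) (hlC Γ (fun _ => Pi.single j 1) p) =
      Γ i p j - Γ j p i := by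
  simp only [ωc, hlC, Pi.single_apply, ite_mul, one_mul, zero_mul, Finset.sum_ite_eq',
    Finset.mem_univ, if_true]
  ring

theorem IsSymmetricConnection.coeff_comm (hΓ : IsSymmetricConnection Γ) (p : TT n) (i j : Fin n) :
    Γ i p j = Γ j p i :=
  sub_eq_zero.1 <| (ωc_hlC_single_single Γ p i j).symm.trans (hΓ _ _ p)

theorem hlC_eq_sum (Γ : Fin n → TT n → (Fin n → ℝ)) (X : TT n → (Fin n → ℝ))
    (p : TT n) :
    hlC Γ X p = ∑ i, X p i • ((Pi.single i 1, -Γ i p) : TT n) := by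
  ext j <;> simp [hlC, Prod.fst_sum, Prod.snd_sum, Finset.sum_apply, Pi.single_apply]

theorem fderiv_hlC_eq_sum_dHf (Γ : Fin n → TT n → (Fin n → ℝ)) (f : TT n → ℝ)
    (X : TT n → (Fin n → ℝ)) (p : TT n) :
    fderiv ℝ f p (hlC Γ X p) = ∑ i, X p i * dHf Γ f p i := by
  simp only [hlC_eq_sum, map_sum, map_smul, smul_eq_mul, dHf]

namespace IsIntegralSection

variable {α : (Fin n → ℝ) → (Fin n → ℝ)}

theorem prod_fderiv_eq_hlC (hint : IsIntegralSection Γ α) (x v : Fin n → ℝ) :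
    ((v, fderiv ℝ α x v) : TT n) = hlC Γ (fun _ => v) (x, α x) := by
  rw [hint x v, hlC]

theorem fderiv_component_single (hint : IsIntegralSection Γ α) {x : Fin n → ℝ}
    (hα : DifferentiableAt ℝ α x) (i j : Fin n) :
    fderiv ℝ (fun y => α y j) x (Pi.single i 1) = -Γ i (x, α x) j := by
  simp [fderiv_apply hα, hint x, Pi.single_apply]

end IsIntegralSection

end

/-- Let `Hor` be a symmetric nonlinear connection on `T*M` (horizontal
subbundle Lagrangian for `ω₀`) and `H ∈ C^∞(T*M)` with `d^H H = 0`.  Then every integral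
section `α` of `Hor` (i.e. `Tα(v) = ξ^H(α(x), v)`, in coordinates
`∂αⱼ/∂xᵢ(x) = −Γᵢⱼ(x, α(x))`) is a closed 1-form on which `H` is locally constant; i.e.
`α` is a solution of the Hamilton–Jacobi equation for `H`. -/
theorem integral_section_solves_hamilton_jacobi {n : ℕ}
    (Γ : Fin n → TT n → (Fin n → ℝ)) (H : TT n → ℝ)
    (α : (Fin n → ℝ) → (Fin n → ℝ))
    (hH : Differentiable ℝ H) (hα : Differentiable ℝ α)
    (hsym : ∀ (X Y : TT n → (Fin n → ℝ)) (p : TT n), ωc (hlC Γ X p) (hlC Γ Y p) = 0)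
    (hdH : ∀ (p : TT n) (i : Fin n), fderiv ℝ H p (Pi.single i 1, -(Γ i p)) = 0)
    (hint : ∀ (x : Fin n → ℝ) (v : Fin n → ℝ),
      fderiv ℝ α x v = fun j => -∑ i, v i * Γ i (x, α x) j) :
    (∀ (x : Fin n → ℝ) (i j : Fin n),
      fderiv ℝ (fun y => α y j) x (Pi.single i 1)
        = fderiv ℝ (fun y => α y i) x (Pi.single j 1)) ∧
    (∀ (x v : Fin n → ℝ), fderiv ℝ (fun y => H (y, α y)) x v = 0) := by
  have hsymm : IsSymmetricConnection Γ := hsym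
  have hsection : IsIntegralSection Γ α := hint
  refine ⟨fun x i j => ?closed, fun x v => ?constant⟩
  case closed =>
    rw [hsection.fderiv_component_single (hα x), hsection.fderiv_component_single (hα x),
      hsymm.coeff_comm]
  case constant =>
    rw [fderiv_graph_apply (hH _) (hα x), hsection.prod_fderiv_eq_hlC, fderiv_hlC_eq_sum_dHf]
    exact Finset.sum_eq_zero fun i _ => by rw [dHf, hdH, mul_zero]
end
end
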